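/- Let f : Fin m → Sym2 V be a multigraph on a finite vertex set V. Then for all integers x, z ≥ 0 with x + z ≤ m, one has u_{x+z}·C(x+z, z) ≥ u_x·C(m−x, z). -/

import Mathlib

/-- The underlying simple graph of the sub-multigraph of `f : ι → Sym2 V` on the
edge-index set `S`. -/
def mGraph {V ι : Type*} (f : ι → Sym2 V) (S : Set ι) : SimpleGraph V :=
  SimpleGraph.fromRel (fun a b => ∃ i ∈ S, f i = s(a, b))

/-- Decodability (over `GF(q)` with `q` even): every connected component of the underlying
simple graph contains a vertex carrying a loop. -/
def DecodEven {V ι : Type*} (f : ι → Sym2 V) (S : Set ι) : Prop :=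
  ∀ v : V, ∃ w : V, (mGraph f S).Reachable v w ∧ ∃ i ∈ S, f i = s(w, w)

/-- `uCount f x` is the number of `x`-element subsets `D` of the edge-index set whose
deletion leaves an undecodable (`q` even sense) sub-multigraph. -/
noncomputable def uCount {V ι : Type*} [Fintype ι] (f : ι → Sym2 V) (x : ℕ) : ℕ :=
  Nat.card {D : Finset ι // D.card = x ∧ ¬ DecodEven f ((↑D : Set ι)ᶜ)}

/-- `bCut f` is the least `x` with `uCount f x > 0`. -/
noncomputable def bCut {V ι : Type*} [Fintype ι] (f : ι → Sym2 V) : ℕ :=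
  sInf {x : ℕ | 0 < uCount f x}

/-! The deletion sets that leave the multigraph undecodable form an up-set of `Finset (Fin m)`.
For any up-set, double count the pairs `D ⊆ E` with `#D = x`, `#E = x + z`, both in the family:
each such `D` lies in `C(m - x, z)` sets of size `x + z`, all of them in the family, and each such
`E` contains at most `C(x + z, z)` sets of size `x`. -/

open Finset

section UpperSet

variable {α : Type*} [Fintype α] [DecidableEq α] {𝒜 : Finset (Finset α)}

lemma IsUpperSet.choose_le_card_bipartiteAbove_slice (h𝒜 : IsUpperSet (𝒜 : Set (Finset α)))
    {D : Finset α} (hD : D ∈ 𝒜) (z : ℕ) :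
    (Fintype.card α - #D).choose z ≤ #((𝒜 # (#D + z)).bipartiteAbove (· ⊆ ·) D) := by
  rw [← card_compl, ← card_powersetCard]
  have disjoint_of_mem {A : Finset α} (hA : A ∈ (Dᶜ).powersetCard z) : Disjoint D A :=
    subset_compl_iff_disjoint_left.1 (mem_powersetCard.1 hA).1
  refine card_le_card_of_injOn (D ∪ ·) (fun A hA => ?_) (fun A hA B hB hAB => ?_)
  · rw [mem_coe] at hA
    rw [mem_coe, mem_bipartiteAbove, mem_slice, card_union_of_disjoint (disjoint_of_mem hA),
      (mem_powersetCard.1 hA).2]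
    exact ⟨⟨h𝒜 subset_union_left hD, rfl⟩, subset_union_left⟩
  · rw [← union_sdiff_cancel_left (disjoint_of_mem hA),
      ← union_sdiff_cancel_left (disjoint_of_mem hB)]
    exact congrArg (· \ D) hAB

theorem IsUpperSet.card_slice_mul_choose_le (h𝒜 : IsUpperSet (𝒜 : Set (Finset α)))
    (x z : ℕ) :
    #(𝒜 # x) * (Fintype.card α - x).choose z ≤ #(𝒜 # (x + z)) * (x + z).choose z := by
  refine card_mul_le_card_mul (· ⊆ ·) (fun D hD => ?_) (fun E hE => ?_)
  · obtain ⟨hD𝒜, rfl⟩ := mem_slice.1 hD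
    exact h𝒜.choose_le_card_bipartiteAbove_slice hD𝒜 z
  · obtain ⟨-, hE⟩ := mem_slice.1 hE
    calc #((𝒜 # x).bipartiteBelow (· ⊆ ·) E) ≤ #(E.powersetCard x) :=
          card_le_card fun D hD => by
            rw [mem_bipartiteBelow, mem_slice] at hD
            exact mem_powersetCard.2 ⟨hD.2, hD.1.2⟩
      _ = (x + z).choose z := by rw [card_powersetCard, hE, Nat.choose_symm_add]

end UpperSet

lemma mGraph_mono {V ι : Type*} (f : ι → Sym2 V) {S S' : Set ι} (h : S' ⊆ S) :
    mGraph f S' ≤ mGraph f S := by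
  intro a b hab
  rw [mGraph, SimpleGraph.fromRel_adj] at hab ⊢
  obtain ⟨hne, ⟨j, hj, hfj⟩ | ⟨j, hj, hfj⟩⟩ := hab
  · exact ⟨hne, Or.inl ⟨j, h hj, hfj⟩⟩
  · exact ⟨hne, Or.inr ⟨j, h hj, hfj⟩⟩

lemma DecodEven.mono {V ι : Type*} {f : ι → Sym2 V} {S S' : Set ι} (h : S' ⊆ S)
    (hd : DecodEven f S') : DecodEven f S := fun v =>
  let ⟨w, hr, i, hi, hfi⟩ := hd v
  ⟨w, hr.mono (mGraph_mono f h), i, h hi, hfi⟩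

open scoped Classical in
noncomputable def undecodableDeletions {V ι : Type*} [Fintype ι] (f : ι → Sym2 V) :
    Finset (Finset ι) :=
  {D | ¬ DecodEven f ((D : Set ι)ᶜ)}

lemma isUpperSet_undecodableDeletions {V ι : Type*} [Fintype ι] (f : ι → Sym2 V) :
    IsUpperSet (undecodableDeletions f : Set (Finset ι)) := by
  intro D E hDE hD
  simp only [undecodableDeletions, coe_filter, mem_univ, true_and, Set.mem_ofPred_eq] at hD ⊢
  exact fun hE => hD (hE.mono (Set.compl_subset_compl.2 (coe_subset.2 hDE)))

lemma uCount_eq_card_slice {V ι : Type*} [Fintype ι] (f : ι → Sym2 V) (x : ℕ) :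
    uCount f x = #((undecodableDeletions f).slice x) := by
  classical
  rw [uCount, Nat.card_eq_fintype_card, Fintype.card_subtype]
  congr 1
  ext D
  simp [undecodableDeletions, mem_slice, and_comm]

theorem uCount_binomial_monotone_general {V : Type*} {m : ℕ} (f : Fin m → Sym2 V)
    (x z : ℕ) :
    uCount f x * Nat.choose (m - x) z ≤ uCount f (x + z) * Nat.choose (x + z) z := by
  simpa only [uCount_eq_card_slice, Fintype.card_fin] using
    (isUpperSet_undecodableDeletions f).card_slice_mul_choose_le x z

/-- For any multigraph `f` with `m` edges and all `x, z ≥ 0` with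
`x + z ≤ m`: `u_{x+z}·C(x+z, z) ≥ u_x·C(m−x, z)`. -/
theorem uCount_binomial_monotone {V : Type*} [Fintype V] {m : ℕ} (f : Fin m → Sym2 V)
    (x z : ℕ) (hxz : x + z ≤ m) :
    uCount f x * Nat.choose (m - x) z ≤ uCount f (x + z) * Nat.choose (x + z) z :=
  uCount_binomial_monotone_general f x z
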